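/- arXiv:1007.0690 — 3 statements merged into one kernel-verified Lean document; each statement's English description precedes it below -/
import Mathlib

section
/- An earliest transiting occurrence h_i^e of a serial episode is a minimal occurrence if and only if either it is the last earliest transiting occurrence or h_i^e(v_N) < h_{i+1}^e(v_N). Moreover every minimal window of α is the window of some earliest transiting occurrence satisfying this condition. -/
variable {A : Type}

/-- An occurrence of the (N+1)-node serial episode `α` in the event sequence
`E` (of length `n`): a strictly increasing index map matching the event-types. -/
def IsOcc (E : ℕ → A) (n : ℕ) {N : ℕ} (α : Fin (N+1) → A) (h : Fin (N+1) → ℕ) : Prop :=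
  StrictMono h ∧ (∀ i, h i < n) ∧ (∀ i, E (h i) = α i)

/-- Earliest transiting occurrence: each `h i.succ` is the least index after
`h i.castSucc` carrying event-type `α i.succ`. -/
def IsET (E : ℕ → A) (n : ℕ) {N : ℕ} (α : Fin (N+1) → A) (h : Fin (N+1) → ℕ) : Prop :=
  IsOcc E n α h ∧ ∀ (i : Fin N) (j : ℕ), h i.castSucc < j → E j = α i.succ → h i.succ ≤ j

/-- Lexicographic order on occurrences. -/
def OccLex {N : ℕ} (h1 h2 : Fin (N+1) → ℕ) : Prop :=
  ∃ i, (∀ k < i, h1 k = h2 k) ∧ h1 i < h2 i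

/-- The window `[a, b]` contains an occurrence of `α`. -/
def WindowHasOcc (E : ℕ → A) (n : ℕ) {N : ℕ} (α : Fin (N+1) → A) (a b : ℕ) : Prop :=
  ∃ h, IsOcc E n α h ∧ a ≤ h 0 ∧ h (Fin.last N) ≤ b

/-- `[a, b]` is a minimal window of `α`: it contains an occurrence and no
proper subwindow contains one. -/
def IsMinWindow (E : ℕ → A) (n : ℕ) {N : ℕ} (α : Fin (N+1) → A) (a b : ℕ) : Prop :=
  WindowHasOcc E n α a b ∧
    ∀ c d, a ≤ c → d ≤ b → (a < c ∨ d < b) → ¬ WindowHasOcc E n α c d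

/-- A minimal occurrence: its window is a minimal window. -/
def IsMinOcc (E : ℕ → A) (n : ℕ) {N : ℕ} (α : Fin (N+1) → A) (h : Fin (N+1) → ℕ) : Prop :=
  IsOcc E n α h ∧ IsMinWindow E n α (h 0) (h (Fin.last N))

/-- `h'` is the earliest transiting occurrence immediately following `h`
in the lexicographic enumeration of earliest transiting occurrences. -/
def NextET (E : ℕ → A) (n : ℕ) {N : ℕ} (α : Fin (N+1) → A) (h h' : Fin (N+1) → ℕ) : Prop :=
  IsET E n α h ∧ IsET E n α h' ∧ OccLex h h' ∧
    ¬ ∃ g, IsET E n α g ∧ OccLex h g ∧ OccLex g h'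

/-- `h1 <⋆ h2` are non-interleaved: `h2 (v_j) ≥ h1 (v_{j+1})` for all `j < N`. -/
def NonInterleaved {N : ℕ} (h1 h2 : Fin (N+1) → ℕ) : Prop :=
  ∀ i : Fin N, h1 i.succ ≤ h2 i.castSucc

/-- Non-overlapped occurrences: one ends strictly before the other begins. -/
def NonOverlapped {N : ℕ} (h1 h2 : Fin (N+1) → ℕ) : Prop :=
  h1 (Fin.last N) < h2 0 ∨ h2 (Fin.last N) < h1 0

/-!
An earliest transiting occurrence `h` is dominated coordinatewise by every occurrence starting no
earlier, and every occurrence dominates the greedy earliest transiting occurrence with the same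
start. So a window contains an occurrence iff it contains an earliest transiting one, and `h` is
minimal iff every earliest transiting occurrence starting later also ends later. Since earliest
transiting occurrences are ordered lexicographically by their start, it suffices to check this
for the next one.
-/

variable {E : ℕ → A} {n N : ℕ} {α : Fin (N+1) → A}

/-- `sInf ∅ = 0` makes this junk past a node that cannot be matched; below an occurrence starting
at `s` that never happens (`greedyOcc_le_and_succ_mem`). -/
noncomputable def greedyOcc (E : ℕ → A) (α : Fin (N+1) → A) (s : ℕ) : Fin (N+1) → ℕ :=
  Fin.induction s fun i k => sInf {j | k < j ∧ E j = α i.succ}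

lemma greedyOcc_le_and_succ_mem {g : Fin (N+1) → ℕ} (hg : IsOcc E n α g) :
    (∀ i, greedyOcc E α (g 0) i ≤ g i) ∧
      ∀ i : Fin N, greedyOcc E α (g 0) i.succ ∈
        {j | greedyOcc E α (g 0) i.castSucc < j ∧ E j = α i.succ} := by
  have mem (i : Fin N) (hi : greedyOcc E α (g 0) i.castSucc ≤ g i.castSucc) :
      g i.succ ∈ {j | greedyOcc E α (g 0) i.castSucc < j ∧ E j = α i.succ} :=
    ⟨hi.trans_lt (hg.1 i.castSucc_lt_succ), hg.2.2 i.succ⟩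
  have le : ∀ i, greedyOcc E α (g 0) i ≤ g i := by
    intro i
    induction i using Fin.induction with
    | zero => simp [greedyOcc]
    | succ i ih =>
      simp only [greedyOcc, Fin.induction_succ] at ih ⊢
      exact Nat.sInf_le (mem i ih)
  refine ⟨le, fun i => ?_⟩
  simp only [greedyOcc, Fin.induction_succ]
  exact Nat.sInf_mem ⟨_, mem i (le _)⟩

lemma isET_greedyOcc {g : Fin (N+1) → ℕ} (hg : IsOcc E n α g) :
    IsET E n α (greedyOcc E α (g 0)) := by
  obtain ⟨le, succ_mem⟩ := greedyOcc_le_and_succ_mem hg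
  refine ⟨⟨Fin.strictMono_iff_lt_succ.2 fun i => (succ_mem i).1,
    fun i => (le i).trans_lt (hg.2.1 i), fun i => ?_⟩, fun i j hj hEj => ?_⟩
  · cases i using Fin.cases with
    | zero => simpa [greedyOcc] using hg.2.2 0
    | succ i => exact (succ_mem i).2
  · simp only [greedyOcc, Fin.induction_succ] at hj ⊢
    exact Nat.sInf_le ⟨hj, hEj⟩

namespace IsET

variable {h g : Fin (N+1) → ℕ}

lemma le_of_start_le (hh : IsET E n α h) (hg : IsOcc E n α g) (h0 : h 0 ≤ g 0) (i : Fin (N+1)) :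
    h i ≤ g i := by
  induction i using Fin.induction with
  | zero => exact h0
  | succ i ih => exact hh.2 i _ (ih.trans_lt (hg.1 i.castSucc_lt_succ)) (hg.2.2 i.succ)

lemma start_lt_of_occLex (hh : IsET E n α h) (hg : IsET E n α g) (hl : OccLex h g) :
    h 0 < g 0 := by
  by_contra! hc
  obtain ⟨i, -, hi⟩ := hl
  exact (hg.le_of_start_le hh.1 hc i).not_gt hi

end IsET

lemma occLex_of_start_lt {h g : Fin (N+1) → ℕ} (h0 : h 0 < g 0) : OccLex h g :=
  ⟨0, fun k hk => absurd hk (Fin.not_lt_zero k), h0⟩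

lemma windowHasOcc_iff_exists_isET {a b : ℕ} :
    WindowHasOcc E n α a b ↔ ∃ k, IsET E n α k ∧ a ≤ k 0 ∧ k (Fin.last N) ≤ b := by
  refine ⟨fun ⟨g, hg, hag, hgb⟩ => ?_, fun ⟨k, hk, hak, hkb⟩ => ⟨k, hk.1, hak, hkb⟩⟩
  refine ⟨_, isET_greedyOcc hg, ?_, ((greedyOcc_le_and_succ_mem hg).1 _).trans hgb⟩
  simpa [greedyOcc] using hag

lemma IsET.isMinOcc_iff {h : Fin (N+1) → ℕ} (hh : IsET E n α h) :
    IsMinOcc E n α h ↔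
      ∀ k, IsET E n α k → h 0 < k 0 → h (Fin.last N) < k (Fin.last N) := by
  constructor
  · intro hmin k hk hlt
    refine (hh.le_of_start_le hk.1 hlt.le _).lt_of_ne fun heq => ?_
    exact hmin.2.2 (k 0) _ hlt.le le_rfl (Or.inl hlt) ⟨k, hk.1, le_rfl, heq.ge⟩
  · intro hlater
    refine ⟨hh.1, ⟨h, hh.1, le_rfl, le_rfl⟩, fun c d hc hd hproper hcd => ?_⟩
    obtain ⟨k, hk, hck, hkd⟩ := windowHasOcc_iff_exists_isET.1 hcd
    have hhk := hh.le_of_start_le hk.1 (hc.trans hck) (Fin.last N)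
    rcases (hc.trans hck).eq_or_lt with heq | hlt
    · omega
    · have := hlater k hk hlt
      omega

/-- By `IsET.start_lt_of_occLex`, the lexicographic successor is the earliest transiting
occurrence with the least start after `h 0`. -/
lemma exists_nextET_start_le {h k : Fin (N+1) → ℕ} (hh : IsET E n α h) (hk : IsET E n α k)
    (hlt : h 0 < k 0) : ∃ h', NextET E n α h h' ∧ h' 0 ≤ k 0 := by
  let S : Set ℕ := {s | ∃ g, IsET E n α g ∧ g 0 = s ∧ h 0 < s}
  have hkS : k 0 ∈ S := ⟨k, hk, rfl, hlt⟩
  obtain ⟨h', h'ET, h'0, hs⟩ := Nat.sInf_mem ⟨_, hkS⟩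
  refine ⟨h', ⟨hh, h'ET, occLex_of_start_lt (h'0 ▸ hs), ?_⟩, h'0 ▸ Nat.sInf_le hkS⟩
  rintro ⟨g, hg, hhg, hgh'⟩
  have hgS : g 0 ∈ S := ⟨g, hg, rfl, hh.start_lt_of_occLex hg hhg⟩
  have := Nat.sInf_le hgS
  have := hg.start_lt_of_occLex h'ET hgh'
  omega

lemma IsET.forall_later_iff_nextET {h : Fin (N+1) → ℕ} (hh : IsET E n α h) :
    (∀ k, IsET E n α k → h 0 < k 0 → h (Fin.last N) < k (Fin.last N)) ↔
      ((¬ ∃ h', NextET E n α h h') ∨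
        ∀ h', NextET E n α h h' → h (Fin.last N) < h' (Fin.last N)) := by
  constructor
  · exact fun hlater => Or.inr fun h' hnext =>
      hlater h' hnext.2.1 (hh.start_lt_of_occLex hnext.2.1 hnext.2.2.1)
  · intro hnext k hk hlt
    obtain ⟨h', hh', hh'k⟩ := exists_nextET_start_le hh hk hlt
    rcases hnext with hnone | hall
    · exact absurd ⟨h', hh'⟩ hnone
    · exact (hall h' hh').trans_le (hh'.2.1.le_of_start_le hk.1 hh'k _)

theorem stmt3 (E : ℕ → A) (n : ℕ) {N : ℕ} (α : Fin (N+1) → A) :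
    (∀ h, IsET E n α h →
      (IsMinOcc E n α h ↔
        ((¬ ∃ h', NextET E n α h h') ∨
          ∀ h', NextET E n α h h' → h (Fin.last N) < h' (Fin.last N)))) ∧
    (∀ a b, IsMinWindow E n α a b →
      ∃ h, IsET E n α h ∧ h 0 = a ∧ h (Fin.last N) = b ∧
        ∀ h', NextET E n α h h' → h (Fin.last N) < h' (Fin.last N)) := by
  refine ⟨fun h hh => hh.isMinOcc_iff.trans hh.forall_later_iff_nextET, fun a b hmin => ?_⟩
  obtain ⟨k, hk, hak, hkb⟩ := windowHasOcc_iff_exists_isET.1 hmin.1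
  obtain ⟨hka, hkb'⟩ : k 0 = a ∧ k (Fin.last N) = b := by
    by_contra hne
    exact hmin.2 (k 0) (k (Fin.last N)) hak hkb (by omega) ⟨k, hk.1, le_rfl, le_rfl⟩
  have hkmin : IsMinOcc E n α k := ⟨hk.1, hka ▸ hkb' ▸ hmin⟩
  exact ⟨k, hk, hka, hkb', fun h' hnext =>
    hk.isMinOcc_iff.1 hkmin h' hnext.2.1 (hk.start_lt_of_occLex hnext.2.1 hnext.2.2.1)⟩
end

section
/- If a serial episode α of N nodes has f_mi minimal windows, then its (N−1)-node prefix subepisode α_p = α[1]→...→α[N−1] has at least f_mi minimal windows. Specifically, for each minimal window [n_s, n_e] of α, the window of the earliest occurrence of α_p starting at n_s is a minimal window of α_p, and distinct minimal windows of α give distinct minimal windows of α_p. -/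
variable {A : Type}

/-!
Let `[a, b]` be a minimal window of `α`, cut out by an occurrence `h` with `h 0 = a` and
`h (Fin.last _) = b`, and let `d` be the least right end of a window `[a, d]` holding an
occurrence of the prefix `Fin.init α`; the truncation of `h` shows `d < b`. Then `[a, d]` is a
minimal window of the prefix: a window `[a, d']` with `d' < d` contradicts the choice of `d`, and
an occurrence in `[c, d']` with `a < c` extends by the event at `b` to an occurrence of `α` in
`[c, b]`. The earliest transiting occurrence starting at `a` is pointwise below every occurrence
starting at or after `a`, so it ends exactly at `d`. Minimal windows are determined by their left
end, hence `[a, b] ↦ [a, d]` is injective.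
-/

theorem Fin.strictMono_snoc {α : Type*} [Preorder α] {N : ℕ} {g : Fin (N+1) → α} {b : α}
    (hg : StrictMono g) (hb : g (Fin.last N) < b) :
    StrictMono (Fin.snoc g b : Fin (N+2) → α) := by
  rw [Fin.strictMono_iff_lt_succ]
  intro i
  induction i using Fin.lastCases with
  | last => simpa using hb
  | cast j =>
    rw [← Fin.castSucc_succ, Fin.snoc_castSucc, Fin.snoc_castSucc]
    exact hg Fin.castSucc_lt_succ

namespace IsOcc

variable {E : ℕ → A} {n N : ℕ} {α : Fin (N+2) → A}

theorem init {h : Fin (N+2) → ℕ} (hh : IsOcc E n α h) :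
    IsOcc E n (Fin.init α) (Fin.init h) :=
  ⟨hh.1.comp Fin.strictMono_castSucc, fun _ => hh.2.1 _, fun _ => hh.2.2 _⟩

theorem snoc {g : Fin (N+1) → ℕ} {b : ℕ} (hg : IsOcc E n (Fin.init α) g)
    (hgb : g (Fin.last N) < b) (hb : b < n) (hEb : E b = α (Fin.last _)) :
    IsOcc E n α (Fin.snoc g b) := by
  refine ⟨Fin.strictMono_snoc hg.1 hgb, fun i => ?_, fun i => ?_⟩
  · induction i using Fin.lastCases with
    | last => simpa using hb
    | cast i => simpa using hg.2.1 i
  · induction i using Fin.lastCases with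
    | last => simpa using hEb
    | cast i => rw [Fin.snoc_castSucc]; exact hg.2.2 i

end IsOcc

variable {E : ℕ → A} {n N : ℕ}

theorem IsET.le_of_isOcc {β : Fin (N+1) → A} {hp g : Fin (N+1) → ℕ} (het : IsET E n β hp)
    (hg : IsOcc E n β g) (h0 : hp 0 ≤ g 0) (i : Fin (N+1)) : hp i ≤ g i := by
  induction i using Fin.induction with
  | zero => exact h0
  | succ i ih => exact het.2 i (g i.succ) (ih.trans_lt (hg.1 Fin.castSucc_lt_succ)) (hg.2.2 i.succ)

namespace IsMinWindow

section

variable {α : Fin (N+1) → A} {a b : ℕ}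

theorem exists_isOcc (hw : IsMinWindow E n α a b) :
    ∃ h, IsOcc E n α h ∧ h 0 = a ∧ h (Fin.last N) = b := by
  obtain ⟨h, hh, ha, hb⟩ := hw.1
  have hsub := hw.2 (h 0) (h (Fin.last N)) ha hb
  refine ⟨h, hh, ?_, ?_⟩ <;> by_contra hne <;> exact hsub (by omega) ⟨h, hh, le_rfl, le_rfl⟩

theorem right_unique {b' : ℕ} (hw : IsMinWindow E n α a b) (hw' : IsMinWindow E n α a b') :
    b = b' := by
  by_contra hne
  rcases Ne.lt_or_gt hne with h | h
  · exact hw'.2 a b le_rfl h.le (Or.inr h) hw.1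
  · exact hw.2 a b' le_rfl h.le (Or.inr h) hw'.1

theorem lt_length (hw : IsMinWindow E n α a b) : a < n ∧ b < n := by
  obtain ⟨h, hh, rfl, rfl⟩ := hw.exists_isOcc
  exact ⟨hh.2.1 _, hh.2.1 _⟩

end

section

variable {α : Fin (N+2) → A} {a b d : ℕ}

theorem init_of_isLeast (hw : IsMinWindow E n α a b)
    (hd : IsLeast {d | WindowHasOcc E n (Fin.init α) a d} d) (hdb : d < b) :
    IsMinWindow E n (Fin.init α) a d := by
  obtain ⟨h, hh, -, rfl⟩ := hw.exists_isOcc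
  refine ⟨hd.1, fun c d' hac hd'd hsub ⟨g, hg, hcg, hgd'⟩ => ?_⟩
  rcases hac.eq_or_lt with rfl | hac
  · exact (hd.2 ⟨g, hg, hcg, hgd'⟩).not_gt (hsub.resolve_left (lt_irrefl _))
  · refine hw.2 c _ hac.le le_rfl (Or.inl hac) ⟨Fin.snoc g (h (Fin.last _)), ?_, ?_, ?_⟩
    · exact hg.snoc (by omega) (hh.2.1 _) (hh.2.2 _)
    · simpa using hcg
    · simp

theorem init_of_isET (hw : IsMinWindow E n α a b) {hp : Fin (N+1) → ℕ}
    (het : IsET E n (Fin.init α) hp) (hp0 : hp 0 = a) :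
    IsMinWindow E n (Fin.init α) a (hp (Fin.last N)) := by
  obtain ⟨h, hh, h0, rfl⟩ := hw.exists_isOcc
  refine hw.init_of_isLeast ⟨⟨hp, het.1, hp0.ge, le_rfl⟩, ?_⟩ ?_
  · rintro d ⟨g, hg, hag, hgd⟩
    exact (het.le_of_isOcc hg (hp0 ▸ hag) _).trans hgd
  · calc hp (Fin.last N) ≤ h (Fin.last N).castSucc :=
          het.le_of_isOcc hh.init (hp0.trans h0.symm).le _
      _ < h (Fin.last (N+1)) := hh.1 (Fin.castSucc_lt_last _)

theorem exists_init (hw : IsMinWindow E n α a b) : ∃ d, IsMinWindow E n (Fin.init α) a d := by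
  obtain ⟨h, hh, h0, rfl⟩ := hw.exists_isOcc
  have hmem : h (Fin.last N).castSucc ∈ {d | WindowHasOcc E n (Fin.init α) a d} :=
    ⟨Fin.init h, hh.init, h0.ge, le_rfl⟩
  refine ⟨_, hw.init_of_isLeast ⟨Nat.sInf_mem ⟨_, hmem⟩, fun _ => Nat.sInf_le⟩ ?_⟩
  exact (Nat.sInf_le hmem).trans_lt (hh.1 (Fin.castSucc_lt_last _))

end

end IsMinWindow

theorem finite_setOf_isMinWindow (α : Fin (N+1) → A) :
    {p : ℕ × ℕ | IsMinWindow E n α p.1 p.2}.Finite :=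
  ((Set.finite_Iio n).prod (Set.finite_Iio n)).subset fun _ hw => hw.lt_length

theorem stmt13 (E : ℕ → A) (n : ℕ) {N : ℕ} (α : Fin (N+2) → A) :
    (∀ a b, IsMinWindow E n α a b →
      ∀ hp : Fin (N+1) → ℕ,
        IsET E n (fun i : Fin (N+1) => α i.castSucc) hp → hp 0 = a →
        IsMinWindow E n (fun i : Fin (N+1) => α i.castSucc) a (hp (Fin.last N))) ∧
    {p : ℕ × ℕ | IsMinWindow E n α p.1 p.2}.ncard ≤
      {p : ℕ × ℕ |
        IsMinWindow E n (fun i : Fin (N+1) => α i.castSucc) p.1 p.2}.ncard := by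
  refine ⟨fun a b hw hp het hp0 => hw.init_of_isET het hp0, ?_⟩
  set S := {p : ℕ × ℕ | IsMinWindow E n α p.1 p.2}
  set T := {p : ℕ × ℕ | IsMinWindow E n (Fin.init α) p.1 p.2}
  have hST : Prod.fst '' S ⊆ Prod.fst '' T := by
    rintro _ ⟨⟨a, b⟩, hw, rfl⟩
    obtain ⟨d, hd⟩ := hw.exists_init
    exact ⟨(a, d), hd, rfl⟩
  calc S.ncard = (Prod.fst '' S).ncard :=
        (Set.InjOn.ncard_image fun p hp q hq h => Prod.ext h (hp.right_unique (h ▸ hq))).symm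
    _ ≤ (Prod.fst '' T).ncard := Set.ncard_le_ncard hST ((finite_setOf_isMinWindow _).image _)
    _ ≤ T.ncard := Set.ncard_image_le (finite_setOf_isMinWindow _)
end

section
/- Let {h_1^{no}, h_2^{no}, ...} be the occurrences tracked greedily by taking at each stage the earliest transiting occurrence of α that starts after the end of the previously tracked occurrence (starting from the beginning of the sequence). Then for any set {h'_1 <⋆ ... <⋆ h'_l} of pairwise non-overlapped occurrences of α, we have h_i^{no}(v_N) ≤ h'_i(v_N) for all i ≤ l, and in particular the greedy set is a maximum-cardinality pairwise non-overlapped set of occurrences. -/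
variable {A : Type}

/-- The greedy sequence `h 0, …, h (f-1)` of non-overlapped occurrences: each
is the earliest transiting occurrence that starts after the end of the
previous one, and no occurrence starts after the end of the last one. -/
def GreedyNO (E : ℕ → A) (n : ℕ) {N : ℕ} (α : Fin (N+1) → A)
    (f : ℕ) (h : ℕ → Fin (N+1) → ℕ) : Prop :=
  (∀ i < f, IsET E n α (h i)) ∧
  (0 < f → ∀ g, IsOcc E n α g → ¬ OccLex g (h 0)) ∧
  (∀ i, i + 1 < f → h i (Fin.last N) < h (i+1) 0 ∧
    ∀ g, IsOcc E n α g → h i (Fin.last N) < g 0 → ¬ OccLex g (h (i+1))) ∧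
  (∀ g, IsOcc E n α g → 0 < f ∧ g 0 ≤ h (f-1) (Fin.last N))

/-! An earliest transiting occurrence lies pointwise below every occurrence starting no earlier.
By induction on `i`, the `i`-th greedy occurrence ends no later than `h' i`: since `h' (i+1)` starts
after `h' i` ends, it starts after the `i`-th greedy occurrence ends, so the greedy sequence
continues, and its next element starts, hence also ends, no later than `h' (i+1)`. -/

theorem OccLex.apply_zero_le {N : ℕ} {h₁ h₂ : Fin (N+1) → ℕ} (H : OccLex h₁ h₂) :
    h₁ 0 ≤ h₂ 0 := by
  obtain ⟨j, heq, hlt⟩ := H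
  rcases eq_or_ne j 0 with rfl | hj
  · exact hlt.le
  · exact (heq 0 (Fin.pos_of_ne_zero hj)).le

theorem apply_zero_le_of_not_occLex {N : ℕ} {g h : Fin (N+1) → ℕ} (H : ¬ OccLex g h) :
    h 0 ≤ g 0 := by
  by_contra! hlt
  exact H ⟨0, fun k hk => absurd hk (Fin.not_lt_zero k), hlt⟩

theorem NonOverlapped.last_lt_of_occLex {N : ℕ} {h₁ h₂ : Fin (N+1) → ℕ} (hmono : Monotone h₂)
    (hlex : OccLex h₁ h₂) (hno : NonOverlapped h₁ h₂) : h₁ (Fin.last N) < h₂ 0 := by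
  refine hno.resolve_right fun hlt => ?_
  have := hmono (Fin.zero_le (Fin.last N))
  have := hlex.apply_zero_le
  omega

section

variable {E : ℕ → A} {n N : ℕ} {α : Fin (N+1) → A}

theorem IsET.le_of_apply_zero_le {h g : Fin (N+1) → ℕ} (hET : IsET E n α h)
    (hg : IsOcc E n α g) (h₀ : h 0 ≤ g 0) (k : Fin (N+1)) : h k ≤ g k := by
  induction k using Fin.induction with
  | zero => exact h₀
  | succ i ih => exact hET.2 i _ (ih.trans_lt (hg.1 i.castSucc_lt_succ)) (hg.2.2 i.succ)

namespace GreedyNO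

variable {f : ℕ} {h : ℕ → Fin (N+1) → ℕ} (hG : GreedyNO E n α f h)
include hG

theorem pos {g : Fin (N+1) → ℕ} (hg : IsOcc E n α g) : 0 < f :=
  (hG.2.2.2 g hg).1

theorem last_zero_le {g : Fin (N+1) → ℕ} (hg : IsOcc E n α g) :
    h 0 (Fin.last N) ≤ g (Fin.last N) :=
  (hG.1 0 (hG.pos hg)).le_of_apply_zero_le hg
    (apply_zero_le_of_not_occLex (hG.2.1 (hG.pos hg) g hg)) _

theorem succ_lt_of_last_lt {g : Fin (N+1) → ℕ} (hg : IsOcc E n α g) {i : ℕ} (hi : i < f)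
    (hlt : h i (Fin.last N) < g 0) : i + 1 < f := by
  by_contra! hf
  have := (hG.2.2.2 g hg).2
  rw [show f - 1 = i by omega] at this
  omega

theorem last_succ_le_of_last_lt {g : Fin (N+1) → ℕ} (hg : IsOcc E n α g) {i : ℕ} (hi : i + 1 < f)
    (hlt : h i (Fin.last N) < g 0) : h (i+1) (Fin.last N) ≤ g (Fin.last N) :=
  (hG.1 (i+1) hi).le_of_apply_zero_le hg
    (apply_zero_le_of_not_occLex ((hG.2.2.1 i hi).2 g hg hlt)) _

theorem lt_and_last_le_of_nonOverlapped {l : ℕ} {h' : ℕ → Fin (N+1) → ℕ}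
    (hocc' : ∀ i < l, IsOcc E n α (h' i))
    (hlex' : ∀ i j, i < j → j < l → OccLex (h' i) (h' j))
    (hno' : ∀ i j, i < j → j < l → NonOverlapped (h' i) (h' j)) :
    ∀ i < l, i < f ∧ h i (Fin.last N) ≤ h' i (Fin.last N) := by
  intro i
  induction i with
  | zero => exact fun hl => ⟨hG.pos (hocc' 0 hl), hG.last_zero_le (hocc' 0 hl)⟩
  | succ i ih =>
    intro hl
    obtain ⟨hif, hle⟩ := ih (by omega)
    have hocc := hocc' (i+1) hl
    have hlt : h i (Fin.last N) < h' (i+1) 0 :=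
      hle.trans_lt ((hno' i (i+1) i.lt_succ_self hl).last_lt_of_occLex hocc.1.monotone
        (hlex' i (i+1) i.lt_succ_self hl))
    have hsucc := hG.succ_lt_of_last_lt hocc hif hlt
    exact ⟨hsucc, hG.last_succ_le_of_last_lt hocc hsucc hlt⟩

end GreedyNO

end

theorem stmt18 (E : ℕ → A) (n : ℕ) {N : ℕ} (α : Fin (N+1) → A)
    (f : ℕ) (h : ℕ → Fin (N+1) → ℕ) (hg : GreedyNO E n α f h)
    (l : ℕ) (h' : ℕ → Fin (N+1) → ℕ)
    (hocc' : ∀ i < l, IsOcc E n α (h' i))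
    (hlex' : ∀ i j, i < j → j < l → OccLex (h' i) (h' j))
    (hno' : ∀ i j, i < j → j < l → NonOverlapped (h' i) (h' j)) :
    l ≤ f ∧ ∀ i < l, h i (Fin.last N) ≤ h' i (Fin.last N) := by
  have key := hg.lt_and_last_le_of_nonOverlapped hocc' hlex' hno'
  refine ⟨?_, fun i hi => (key i hi).2⟩
  rcases Nat.eq_zero_or_pos l with rfl | hl
  · exact Nat.zero_le f
  · have := (key (l-1) (by omega)).1
    omega
end
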